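/- arXiv:math/0602308 — 3 statements merged into one kernel-verified Lean document; each statement's English description precedes it below -/
import Mathlib

section
/- Let λ > 0, 0 ≤ ν ≤ λ, and set F₁(t) = (1+λt/2)² e^{−λt}, F₂(t) = e^{−λt}, G₁(t) = (1+λt/2)[1+λt/2+(νt)²/8]e^{−λt}, G₂(t) = [1 + ((νt)²/8)/(1+λt/2)]e^{−λt}. Then G₁(t)/F₁(t) = G₂(t)/F₂(t) and F₁(t) ≤ G₁(t) ≤ [(F₁(t)+F₂(t))/2]·√(F₁(t)/F₂(t)) for all t ≥ 0, and consequently [F₁(t)+F₂(t)]²/4 ≥ G₁(t)G₂(t) and F_i(t) ≤ G_i(t), i = 1,2, for all t ≥ 0. -/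
theorem stmt_14 (lam nu : ℝ) (hlam : 0 < lam) (hnu : 0 ≤ nu) (hnulam : nu ≤ lam)
    (F₁ F₂ G₁ G₂ : ℝ → ℝ)
    (hF₁ : ∀ t, F₁ t = (1 + lam * t / 2) ^ 2 * Real.exp (-lam * t))
    (hF₂ : ∀ t, F₂ t = Real.exp (-lam * t))
    (hG₁ : ∀ t, G₁ t = (1 + lam * t / 2) * (1 + lam * t / 2 + (nu * t) ^ 2 / 8) *
      Real.exp (-lam * t))
    (hG₂ : ∀ t, G₂ t = (1 + ((nu * t) ^ 2 / 8) / (1 + lam * t / 2)) * Real.exp (-lam * t)) :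
    ∀ t, 0 ≤ t →
      (G₁ t / F₁ t = G₂ t / F₂ t ∧
        F₁ t ≤ G₁ t ∧ G₁ t ≤ (F₁ t + F₂ t) / 2 * Real.sqrt (F₁ t / F₂ t)) ∧
      G₁ t * G₂ t ≤ (F₁ t + F₂ t) ^ 2 / 4 ∧ F₁ t ≤ G₁ t ∧ F₂ t ≤ G₂ t := by
  intro t ht
  have he : 0 < Real.exp (-lam * t) := Real.exp_pos _
  have hs : (1:ℝ) ≤ 1 + lam * t / 2 := by nlinarith
  have hs0 : (0:ℝ) < 1 + lam * t / 2 := by linarith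
  have hq : (0:ℝ) ≤ (nu * t) ^ 2 / 8 := by positivity
  have hnut : nu * t ≤ lam * t := by nlinarith
  have hnut0 : 0 ≤ nu * t := by positivity
  have key : 1 + lam * t / 2 + (nu * t) ^ 2 / 8 ≤ ((1 + lam * t / 2) ^ 2 + 1) / 2 := by
    nlinarith [sq_nonneg (lam * t - nu * t)]
  have hsqrt : Real.sqrt (F₁ t / F₂ t) = 1 + lam * t / 2 := by
    rw [hF₁, hF₂, mul_div_assoc, div_self he.ne', mul_one, Real.sqrt_sq hs0.le]
  refine ⟨⟨?_, ?_, ?_⟩, ?_, ?_, ?_⟩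
  · rw [hF₁, hF₂, hG₁, hG₂]
    field_simp
  · rw [hF₁, hG₁]
    have h : (1 + lam * t / 2) ^ 2 ≤ (1 + lam * t / 2) * (1 + lam * t / 2 + (nu * t) ^ 2 / 8) := by
      nlinarith
    exact mul_le_mul_of_nonneg_right h he.le
  · rw [hsqrt, hF₁, hF₂, hG₁]
    have h3 := mul_le_mul_of_nonneg_left key hs0.le
    nlinarith [mul_le_mul_of_nonneg_right h3 he.le]
  · rw [hF₁, hF₂, hG₁, hG₂]
    have h1 : (1 + lam * t / 2) * (1 + lam * t / 2 + (nu * t) ^ 2 / 8) * Real.exp (-lam * t) *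
        ((1 + (nu * t) ^ 2 / 8 / (1 + lam * t / 2)) * Real.exp (-lam * t)) =
        (1 + lam * t / 2 + (nu * t) ^ 2 / 8) ^ 2 * (Real.exp (-lam * t)) ^ 2 := by
      field_simp
    rw [h1]
    have h2 : (1 + lam * t / 2 + (nu * t) ^ 2 / 8) ^ 2 ≤ (((1 + lam * t / 2) ^ 2 + 1) / 2) ^ 2 := by
      have := key
      nlinarith
    calc (1 + lam * t / 2 + (nu * t) ^ 2 / 8) ^ 2 * Real.exp (-lam * t) ^ 2
        ≤ (((1 + lam * t / 2) ^ 2 + 1) / 2) ^ 2 * Real.exp (-lam * t) ^ 2 := by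
          exact mul_le_mul_of_nonneg_right h2 (by positivity)
      _ = ((1 + lam * t / 2) ^ 2 * Real.exp (-lam * t) + Real.exp (-lam * t)) ^ 2 / 4 := by ring
  · rw [hF₁, hG₁]
    have h : (1 + lam * t / 2) ^ 2 ≤ (1 + lam * t / 2) * (1 + lam * t / 2 + (nu * t) ^ 2 / 8) := by
      nlinarith
    exact mul_le_mul_of_nonneg_right h he.le
  · rw [hF₂, hG₂]
    nlinarith [div_nonneg hq hs0.le]
end

section
/- Let F₁, F₂, G₁, G₂ be differentiable survival functions on [0,∞) with F_i(0) = G_i(0) = 1, such that conditions (i) [F₁(t)+F₂(t)]²/4 ≥ G₁(t)G₂(t) and (ii) F_i(t) ≤ G_i(t) (i = 1,2) hold for all t ≥ 0. Then F_i'(0) = G_i'(0) for i = 1,2; equivalently, the density functions satisfy f_i(0) = g_i(0), i = 1,2. -/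
/-!
Both inequalities are equalities at `t = 0`, so comparing right derivatives at `0` gives
`F_i'(0) ≤ G_i'(0)` from (ii), and `G₁'(0) + G₂'(0) ≤ F₁'(0) + F₂'(0)` from (i), since all four
functions equal `1` at `0`. Adding up, the two inequalities of (ii) must be equalities.
-/

open Set

theorem HasDerivAt.nonneg_of_isLocalMinOn_Ici {f : ℝ → ℝ} {f' a : ℝ} (hf : HasDerivAt f f' a)
    (hmin : IsLocalMinOn f (Ici a) a) : 0 ≤ f' := by
  have hcone : (1 : ℝ) ∈ posTangentConeAt (Ici a) a :=
    mem_posTangentConeAt_of_segment_subset <|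
      (segment_subset_Icc (by linarith : a ≤ a + 1)).trans Icc_subset_Ici_self
  simpa using hmin.hasFDerivWithinAt_nonneg hf.hasDerivWithinAt.hasFDerivWithinAt hcone

theorem HasDerivAt.le_of_le_of_eq_right {f g : ℝ → ℝ} {f' g' a : ℝ} (hf : HasDerivAt f f' a)
    (hg : HasDerivAt g g' a) (ha : f a = g a) (hle : ∀ t, a ≤ t → f t ≤ g t) : f' ≤ g' := by
  have hmin : IsLocalMinOn (g - f) (Ici a) a :=
    IsMinOn.localize fun t ht ↦ by simpa [ha] using hle t ht
  simpa using (hg.sub hf).nonneg_of_isLocalMinOn_Ici hmin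

theorem stmt_15 (F₁ F₂ G₁ G₂ : ℝ → ℝ)
    (hdF₁ : Differentiable ℝ F₁) (hdF₂ : Differentiable ℝ F₂)
    (hdG₁ : Differentiable ℝ G₁) (hdG₂ : Differentiable ℝ G₂)
    (hF₁0 : F₁ 0 = 1) (hF₂0 : F₂ 0 = 1) (hG₁0 : G₁ 0 = 1) (hG₂0 : G₂ 0 = 1)
    (hi : ∀ t, 0 ≤ t → G₁ t * G₂ t ≤ (F₁ t + F₂ t) ^ 2 / 4)
    (hii₁ : ∀ t, 0 ≤ t → F₁ t ≤ G₁ t) (hii₂ : ∀ t, 0 ≤ t → F₂ t ≤ G₂ t) :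
    deriv F₁ 0 = deriv G₁ 0 ∧ deriv F₂ 0 = deriv G₂ 0 := by
  have hF₁ := (hdF₁ 0).hasDerivAt
  have hF₂ := (hdF₂ 0).hasDerivAt
  have hG₁ := (hdG₁ 0).hasDerivAt
  have hG₂ := (hdG₂ 0).hasDerivAt
  have hle₁ := hF₁.le_of_le_of_eq_right hG₁ (by rw [hF₁0, hG₁0]) hii₁
  have hle₂ := hF₂.le_of_le_of_eq_right hG₂ (by rw [hF₂0, hG₂0]) hii₂
  have hprod : HasDerivAt (fun t ↦ G₁ t * G₂ t) (deriv G₁ 0 + deriv G₂ 0) 0 := by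
    refine (hG₁.mul hG₂).congr_deriv ?_
    rw [hG₁0, hG₂0]
    ring
  have hsq : HasDerivAt (fun t ↦ (F₁ t + F₂ t) ^ 2 / 4) (deriv F₁ 0 + deriv F₂ 0) 0 := by
    refine (((hF₁.add hF₂).pow 2).div_const 4).congr_deriv ?_
    rw [Pi.add_apply, hF₁0, hF₂0]
    norm_num
  have hsum := hprod.le_of_le_of_eq_right hsq (by rw [hF₁0, hF₂0, hG₁0, hG₂0]; norm_num) hi
  exact ⟨by linarith, by linarith⟩
end

section
/- There exist survival functions F₁, F₂, G₁, G₂ on [0,∞) (decreasing, continuous, F_i(0)=G_i(0)=1, tending to 0) such that F_i(t) ≤ G_i(t) for all t and i = 1,2, yet [F₁(t)+F₂(t)]²/4 ≥ G₁(t)G₂(t) for all t, with strict inequality for some t in both families of inequalities. -/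
/-! Take `G₁ = F₁ = u⁴` and `G₂ = u²` with `u = e^{-t}`, and lower `G₂` to
`F₂ = u² (1 - (1 - u)² / 2)`. The loss is small enough for the identity
`(u⁴ + F₂) / 2 = (u (1 + u) / 2)²` to keep the product inequality, which then reduces to the
AM–GM inequality `√u ≤ (1 + u) / 2`. -/

open Filter Topology

def IsSurvivalFunction (H : ℝ → ℝ) : Prop :=
  AntitoneOn H (Set.Ici 0) ∧ Continuous H ∧ H 0 = 1 ∧ Tendsto H atTop (𝓝 0)

namespace IsSurvivalFunction

variable {S : ℝ → ℝ}

theorem mem_Icc (hS : IsSurvivalFunction S) {t : ℝ} (ht : 0 ≤ t) : S t ∈ Set.Icc 0 1 := by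
  obtain ⟨hanti, -, h0, hlim⟩ := hS
  refine ⟨le_of_tendsto hlim ?_, h0 ▸ hanti Set.self_mem_Ici ht ht⟩
  filter_upwards [eventually_ge_atTop t] with s hs
  exact hanti ht (ht.trans hs) hs

theorem comp (hS : IsSurvivalFunction S) {φ : ℝ → ℝ} (hcont : Continuous φ)
    (hmono : MonotoneOn φ (Set.Icc 0 1)) (h0 : φ 0 = 0) (h1 : φ 1 = 1) :
    IsSurvivalFunction (φ ∘ S) := by
  refine ⟨fun s hs t ht hst => hmono (hS.mem_Icc ht) (hS.mem_Icc hs) (hS.1 hs ht hst),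
    hcont.comp hS.2.1, by simp [hS.2.2.1, h1], ?_⟩
  simpa [h0] using (hcont.tendsto 0).comp hS.2.2.2

end IsSurvivalFunction

theorem isSurvivalFunction_exp_neg : IsSurvivalFunction fun t => Real.exp (-t) :=
  ⟨fun _ _ _ _ hst => Real.exp_le_exp.mpr (neg_le_neg hst), by fun_prop, by simp,
    Real.tendsto_exp_neg_atTop_nhds_zero⟩

theorem isSurvivalFunction_pow {S : ℝ → ℝ} (hS : IsSurvivalFunction S) {n : ℕ} (hn : n ≠ 0) :
    IsSurvivalFunction fun t => S t ^ n :=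
  hS.comp (continuous_pow n) (fun _ ha _ _ hab => pow_le_pow_left₀ ha.1 hab n)
    (zero_pow hn) (one_pow n)

noncomputable def lowered (u : ℝ) : ℝ := u ^ 2 * (1 - (1 - u) ^ 2 / 2)

theorem lowered_monotoneOn : MonotoneOn lowered (Set.Icc 0 1) := by
  intro a ha b hb hab
  unfold lowered
  have hfac : 1 - (1 - a) ^ 2 / 2 ≤ 1 - (1 - b) ^ 2 / 2 := by nlinarith [hb.2]
  have hpos : 0 ≤ 1 - (1 - a) ^ 2 / 2 := by nlinarith [ha.1, ha.2]
  exact mul_le_mul (pow_le_pow_left₀ ha.1 hab 2) hfac hpos (sq_nonneg b)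

theorem lowered_le_sq (u : ℝ) : lowered u ≤ u ^ 2 := by
  unfold lowered
  nlinarith [mul_nonneg (sq_nonneg u) (sq_nonneg (1 - u))]

theorem lowered_lt_sq {u : ℝ} (h0 : u ≠ 0) (h1 : u ≠ 1) : lowered u < u ^ 2 := by
  unfold lowered
  have : 0 < u ^ 2 * (1 - u) ^ 2 := by positivity [sub_ne_zero.mpr h1.symm]
  linarith

theorem pow_four_add_lowered_div_two (u : ℝ) :
    (u ^ 4 + lowered u) / 2 = (u * (1 + u) / 2) ^ 2 := by
  unfold lowered; ring

theorem pow_four_mul_sq_le {u : ℝ} (hu : 0 ≤ u) :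
    u ^ 4 * u ^ 2 ≤ ((u ^ 4 + lowered u) / 2) ^ 2 := by
  rw [pow_four_add_lowered_div_two]
  have amgm : u ≤ ((1 + u) / 2) ^ 2 := by nlinarith [sq_nonneg (1 - u)]
  have := mul_le_mul_of_nonneg_left (pow_le_pow_left₀ hu amgm 2) (pow_nonneg hu 4)
  linarith

theorem pow_four_mul_sq_lt {u : ℝ} (h0 : 0 < u) (h1 : u ≠ 1) :
    u ^ 4 * u ^ 2 < ((u ^ 4 + lowered u) / 2) ^ 2 := by
  rw [pow_four_add_lowered_div_two]
  have amgm : u < ((1 + u) / 2) ^ 2 := by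
    nlinarith [sq_pos_of_ne_zero (sub_ne_zero.mpr h1.symm)]
  have := mul_lt_mul_of_pos_left (pow_lt_pow_left₀ amgm h0.le two_ne_zero) (pow_pos h0 4)
  linarith

theorem stmt_18 :
    ∃ F₁ F₂ G₁ G₂ : ℝ → ℝ,
      (∀ H ∈ [F₁, F₂, G₁, G₂], AntitoneOn H (Set.Ici 0) ∧ Continuous H ∧ H 0 = 1 ∧
        Tendsto H atTop (nhds 0)) ∧
      (∀ t, 0 ≤ t → F₁ t ≤ G₁ t ∧ F₂ t ≤ G₂ t) ∧
      (∀ t, 0 ≤ t → G₁ t * G₂ t ≤ ((F₁ t + F₂ t) / 2) ^ 2) ∧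
      (∃ t, 0 ≤ t ∧ (F₁ t < G₁ t ∨ F₂ t < G₂ t)) ∧
      (∃ t, 0 ≤ t ∧ G₁ t * G₂ t < ((F₁ t + F₂ t) / 2) ^ 2) := by
  set S : ℝ → ℝ := fun t => Real.exp (-t)
  have hS : IsSurvivalFunction S := isSurvivalFunction_exp_neg
  have hS1 : S 1 ≠ 1 := by simp [S]
  refine ⟨fun t => S t ^ 4, lowered ∘ S, fun t => S t ^ 4, fun t => S t ^ 2, ?_,
    fun t _ => ⟨le_rfl, lowered_le_sq (S t)⟩,
    fun t ht => pow_four_mul_sq_le (hS.mem_Icc ht).1,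
    ⟨1, zero_le_one, Or.inr (lowered_lt_sq (Real.exp_pos _).ne' hS1)⟩,
    ⟨1, zero_le_one, pow_four_mul_sq_lt (Real.exp_pos _) hS1⟩⟩
  simp only [List.mem_cons, List.not_mem_nil, or_false]
  rintro H (rfl | rfl | rfl | rfl)
  · exact isSurvivalFunction_pow hS four_ne_zero
  · exact hS.comp (by unfold lowered; fun_prop) lowered_monotoneOn (by simp [lowered])
      (by simp [lowered])
  · exact isSurvivalFunction_pow hS four_ne_zero
  · exact isSurvivalFunction_pow hS two_ne_zero
end
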